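/- For integers n, d, x for which the graphs are defined: W(G₁(n,d,x,1)) = W(G₁(n,d,x,0)) + 1, W(G₁(n,d,x,2)) = W(G₁(n,d,x,0)) + 6, and W(G₁(n,d,x,−1)) = W(G₁(n,d,x,0)) + 3. -/

import Mathlib

/-- The Wiener index: sum of distances over unordered pairs of vertices. -/
noncomputable def wiener {V : Type*} [Fintype V] (G : SimpleGraph V) : ℕ :=
  (∑ u : V, ∑ v : V, G.dist u v) / 2

/-- Vertex set for a caterpillar with spine `u_{-d}, …, u_d` and `L i` leaves at `u_i`.
`(0, i)` is the spine vertex `u_i`; `(j, i)` for `1 ≤ j ≤ L i` is the `j`-th leaf at `u_i`. -/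
noncomputable def catVerts (d : ℤ) (L : ℤ → ℕ) : Finset (ℤ × ℤ) :=
  (Finset.Icc (-d) d).biUnion (fun i => (Finset.Icc (0:ℤ) (L i : ℤ)).image (fun j => (j, i)))

/-- The caterpillar graph with spine `u_{-d}, …, u_d` and `L i` leaves appended to `u_i`. -/
def caterpillar (d : ℤ) (L : ℤ → ℕ) : SimpleGraph ↥(catVerts d L) :=
  SimpleGraph.fromRel (fun a b =>
    (a.1.1 = 0 ∧ b.1.1 = 0 ∧ a.1.2 + 1 = b.1.2) ∨
    (a.1.2 = b.1.2 ∧ a.1.1 = 0 ∧ b.1.1 ≠ 0))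

/-- Leaf-count function of the caterpillar `B₁(n,d,x)`. -/
def B1L (n d x : ℤ) : ℤ → ℕ := fun i =>
  (if i = -d - 1 + x ∨ i = d + 1 - x then 1 else 0) +
  (if |i| ≤ (n - 2*d - 4)/2 then 1 else 0)

/-- The caterpillar `B₁(n,d,x)`. -/
noncomputable def B1 (n d x : ℤ) := caterpillar d (B1L n d x)

/-- Leaf-count function of the caterpillar `B₂(n,d,x)`. -/
def B2L (n d x : ℤ) : ℤ → ℕ := fun i =>
  (if |i| ≤ d - 2 then 1 else 0) +
  (if |i| = d - 1 then x.toNat else 0) +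
  (if |i| = d then ((n - 4*d - 2*x + 2)/2).toNat else 0)

/-- The caterpillar `B₂(n,d,x)`. -/
noncomputable def B2 (n d x : ℤ) := caterpillar d (B2L n d x)

/-- `G₁(n,d,x,s)`: `B₁(n−2,d,x)` with an extra leaf at `u_s` and at `u_d`. -/
noncomputable def G1 (n d x s : ℤ) :=
  caterpillar d (fun i => B1L (n-2) d x i + (if i = s then 1 else 0) + (if i = d then 1 else 0))

/-- `G₂(n,d,x,s)`: `B₂(n−2,d,x)` with an extra leaf at `u_s` and at `u_d`. -/
noncomputable def G2 (n d x s : ℤ) :=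
  caterpillar d (fun i => B2L (n-2) d x i + (if i = s then 1 else 0) + (if i = d then 1 else 0))

/-- `G₃(n,d,x,s)`: `B₁(n−1,d,x)` with an extra leaf at `u_s`. -/
noncomputable def G3 (n d x s : ℤ) :=
  caterpillar d (fun i => B1L (n-1) d x i + (if i = s then 1 else 0))

/-- `G₄(n,d,x,s)`: `B₂(n−1,d,x)` with an extra leaf at `u_s`. -/
noncomputable def G4 (n d x s : ℤ) :=
  caterpillar d (fun i => B2L (n-1) d x i + (if i = s then 1 else 0))

/-- The star on `n` vertices: vertex `0` adjacent to all others. -/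
def starGraph (n : ℕ) : SimpleGraph (Fin n) :=
  SimpleGraph.fromRel (fun a _ => a.val = 0)

/-!
In a caterpillar, the distance between two vertices is the distance between their spine
positions plus one for each endpoint that is a leaf. Attaching a new leaf at `u_s` to a
caterpillar with `L i` leaves at `u_i` therefore raises the Wiener index by
`∑ᵢ (L i + 1) |s - i|` plus a term independent of `s`. For `G₁` the weights `L i + 1` add up
the whole spine, the block of leaves at `|i| ≤ K` in `B₁`, and single leaves at `u_{±(d+1-x)}`
and `u_d`. A symmetric block `[-m, m]` contributes `s²` to `W(G₁(s)) - W(G₁(0))` as long as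
`|s| ≤ m + 1`, and the three single leaves contribute `s - s - s`, so
`W(G₁(s)) - W(G₁(0)) = 2s² - s`: this is `1`, `6`, `3` for `s = 1, 2, -1`.
-/

open Finset

theorem Finset.sum_sum_insert_of_symm {α M : Type*} [DecidableEq α] [AddCommMonoid M]
    {f : α → α → M} (hf : ∀ a b, f a b = f b a) {s : Finset α} {v : α} (hv : v ∉ s) :
    ∑ a ∈ insert v s, ∑ b ∈ insert v s, f a b =
      ∑ a ∈ s, ∑ b ∈ s, f a b + f v v + 2 • ∑ b ∈ s, f v b := by
  simp only [sum_insert hv, sum_add_distrib, two_nsmul, hf _ v]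
  abel

lemma sum_Icc_abs_add_one_sub {m s : ℤ} (h1 : -m - 1 ≤ s) (h2 : s ≤ m) :
    ∑ i ∈ Icc (-m) m, |s + 1 - i| = ∑ i ∈ Icc (-m) m, |s - i| + (2 * s + 1) := by
  have hshift : ∑ i ∈ Icc (-m) m, |s + 1 - i| =
      ∑ i ∈ Icc (-m - 1) (m - 1), |s - i| := by
    rw [sub_eq_add_neg (-m), sub_eq_add_neg m, ← Finset.map_add_right_Icc, sum_map]
    refine sum_congr rfl fun i _ => ?_
    simp only [addRightEmbedding_apply]
    ring_nf
  have hm : -m - 1 ≤ m := by omega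
  have hleft : ∑ i ∈ Icc (-m - 1) m, |s - i| =
      |s - (-m - 1)| + ∑ i ∈ Icc (-m) m, |s - i| := by
    rw [← Finset.insert_Icc_left_eq_Icc_sub_one hm, sum_insert (by simp)]
  have hright : ∑ i ∈ Icc (-m - 1) m, |s - i| =
      |s - m| + ∑ i ∈ Icc (-m - 1) (m - 1), |s - i| := by
    rw [← Finset.insert_Icc_sub_one_right_eq_Icc hm, sum_insert (by simp)]
  rw [abs_of_nonneg (by omega : 0 ≤ s - (-m - 1))] at hleft
  rw [abs_of_nonpos (by omega : s - m ≤ 0)] at hright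
  linarith

theorem sum_Icc_abs_sub_sub_abs {m s : ℤ} (hs : |s| ≤ m + 1) :
    ∑ i ∈ Icc (-m) m, (|s - i| - |i|) = s ^ 2 := by
  rw [sum_sub_distrib, sub_eq_iff_eq_add']
  induction s using Int.inductionOn' (b := 0) with
  | zero => simp
  | succ k hk ih =>
    rw [abs_of_nonneg (by omega)] at hs
    rw [sum_Icc_abs_add_one_sub (by omega) (by omega), ih (by rw [abs_of_nonneg hk]; omega)]
    ring
  | pred k hk ih =>
    rw [abs_of_nonpos (by omega)] at hs
    have := sum_Icc_abs_add_one_sub (m := m) (s := k - 1) (by omega) (by omega)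
    rw [sub_add_cancel, ih (by rw [abs_of_nonpos hk]; omega)] at this
    linarith

namespace Caterpillar

variable {d : ℤ} {L : ℤ → ℕ}

def depth (p : ℤ × ℤ) : ℕ := if p.1 = 0 then 0 else 1

def catDist (p q : ℤ × ℤ) : ℕ :=
  if p = q then 0 else (p.2 - q.2).natAbs + depth p + depth q

@[simp] lemma catDist_self (p : ℤ × ℤ) : catDist p p = 0 := if_pos rfl

lemma catDist_comm (p q : ℤ × ℤ) : catDist p q = catDist q p := by
  by_cases hpq : p = q
  · rw [hpq]
  simp only [catDist, if_neg hpq, if_neg (Ne.symm hpq)]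
  omega

lemma catDist_triangle (p q r : ℤ × ℤ) : catDist p q ≤ catDist p r + catDist r q := by
  by_cases hpq : p = q
  · simp [catDist, hpq]
  by_cases hpr : p = r
  · simp [hpr]
  by_cases hrq : r = q
  · simp [hrq]
  simp only [catDist, if_neg hpq, if_neg hpr, if_neg hrq]
  omega

lemma mem_catVerts {p : ℤ × ℤ} :
    p ∈ catVerts d L ↔ p.2 ∈ Icc (-d) d ∧ 0 ≤ p.1 ∧ p.1 ≤ L p.2 := by
  simp only [catVerts, mem_biUnion, mem_image, mem_Icc]
  constructor
  · rintro ⟨i, hi, j, hj, rfl⟩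
    exact ⟨hi, hj⟩
  · rintro ⟨hi, hj⟩
    exact ⟨p.2, hi, p.1, hj, rfl⟩

lemma catDist_le_one_of_adj {a b : catVerts d L} (h : (caterpillar d L).Adj a b) :
    catDist a.1 b.1 ≤ 1 := by
  rw [caterpillar, SimpleGraph.fromRel_adj] at h
  obtain ⟨hab, h⟩ := h
  have hab' : a.1 ≠ b.1 := fun h => hab (Subtype.ext h)
  simp only [catDist, depth, if_neg hab']
  split_ifs <;> omega

lemma catDist_le_length {a b : catVerts d L} (p : (caterpillar d L).Walk a b) :
    catDist a.1 b.1 ≤ p.length := by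
  induction p with
  | nil => simp [catDist]
  | @cons u v w h p ih =>
    rw [SimpleGraph.Walk.length_cons]
    have := catDist_le_one_of_adj h
    exact (catDist_triangle u.1 w.1 v.1).trans (by omega)

lemma exists_spine_walk_of_eq_add (k : ℕ) :
    ∀ a b : catVerts d L, a.1.1 = 0 → b.1.1 = 0 → b.1.2 = a.1.2 + k →
      ∃ p : (caterpillar d L).Walk a b, p.length = k := by
  induction k with
  | zero =>
    intro a b ha hb hab
    obtain rfl : a = b := Subtype.ext (Prod.ext (ha.trans hb.symm) (by omega))
    exact ⟨.nil, rfl⟩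
  | succ k ih =>
    intro a b ha hb hab
    have hb' := (mem_catVerts.mp b.2).1
    have ha' := (mem_catVerts.mp a.2).1
    rw [mem_Icc] at ha' hb'
    let c : catVerts d L := ⟨(0, a.1.2 + 1),
      mem_catVerts.mpr ⟨mem_Icc.mpr ⟨by omega, by omega⟩, le_rfl, by positivity⟩⟩
    have hac : (caterpillar d L).Adj a c := by
      rw [caterpillar, SimpleGraph.fromRel_adj]
      refine ⟨fun h => ?_, Or.inl (Or.inl ⟨ha, rfl, rfl⟩)⟩
      have := congrArg (fun v : catVerts d L => v.1.2) h
      simp [c] at this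
    obtain ⟨p, hp⟩ := ih c b rfl hb (by simp [c]; omega)
    exact ⟨.cons hac p, by simp [hp]⟩

lemma exists_spine_walk (a b : catVerts d L) (ha : a.1.1 = 0) (hb : b.1.1 = 0) :
    ∃ p : (caterpillar d L).Walk a b, p.length = (a.1.2 - b.1.2).natAbs := by
  rcases le_total a.1.2 b.1.2 with h | h
  · exact exists_spine_walk_of_eq_add (a.1.2 - b.1.2).natAbs a b ha hb (by omega)
  · obtain ⟨p, hp⟩ := exists_spine_walk_of_eq_add (a.1.2 - b.1.2).natAbs b a hb ha (by omega)
    exact ⟨p.reverse, by simp [hp]⟩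

lemma exists_walk_to_spine (a : catVerts d L) :
    ∃ c : catVerts d L, c.1.1 = 0 ∧ c.1.2 = a.1.2 ∧
      ∃ p : (caterpillar d L).Walk a c, p.length = depth a.1 := by
  by_cases ha : a.1.1 = 0
  · exact ⟨a, ha, rfl, .nil, by simp [depth, ha]⟩
  · have hc : ((0 : ℤ), a.1.2) ∈ catVerts d L :=
      mem_catVerts.mpr ⟨(mem_catVerts.mp a.2).1, le_rfl, by positivity⟩
    have hac : (caterpillar d L).Adj a ⟨_, hc⟩ := by
      rw [caterpillar, SimpleGraph.fromRel_adj]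
      exact ⟨fun h => ha (by rw [h]), Or.inr (Or.inr ⟨rfl, rfl, ha⟩)⟩
    exact ⟨⟨_, hc⟩, rfl, rfl, hac.toWalk, by simp [depth, ha]⟩

lemma exists_walk_length_eq_catDist (a b : catVerts d L) :
    ∃ p : (caterpillar d L).Walk a b, p.length = catDist a.1 b.1 := by
  by_cases hab : a = b
  · subst hab
    exact ⟨.nil, by simp [catDist]⟩
  obtain ⟨c, hc0, hca, p, hp⟩ := exists_walk_to_spine a
  obtain ⟨c', hc0', hcb, q, hq⟩ := exists_walk_to_spine b
  obtain ⟨r, hr⟩ := exists_spine_walk c c' hc0 hc0'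
  refine ⟨(p.append r).append q.reverse, ?_⟩
  have hab' : a.1 ≠ b.1 := fun h => hab (Subtype.ext h)
  simp only [SimpleGraph.Walk.length_append, SimpleGraph.Walk.length_reverse, catDist,
    if_neg hab']
  omega

theorem dist_caterpillar (a b : catVerts d L) :
    (caterpillar d L).dist a b = catDist a.1 b.1 := by
  obtain ⟨p, hp⟩ := exists_walk_length_eq_catDist a b
  obtain ⟨q, hq⟩ := SimpleGraph.Reachable.exists_walk_length_eq_dist ⟨p⟩
  exact le_antisymm (hp ▸ SimpleGraph.dist_le p) (hq ▸ catDist_le_length q)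

theorem wiener_caterpillar :
    wiener (caterpillar d L) =
      (∑ p ∈ catVerts d L, ∑ q ∈ catVerts d L, catDist p q) / 2 := by
  simp only [wiener, dist_caterpillar, sum_coe_sort (catVerts d L) (catDist _)]
  rw [sum_coe_sort (catVerts d L) (fun p => ∑ q ∈ catVerts d L, catDist p q)]

lemma new_leaf_notMem_catVerts (s : ℤ) : ((L s : ℤ) + 1, s) ∉ catVerts d L := by
  rw [mem_catVerts]
  dsimp only
  omega

lemma catVerts_add_leaf {s : ℤ} (hs : s ∈ Icc (-d) d) :
    catVerts d (fun i => L i + if i = s then 1 else 0) =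
      insert ((L s : ℤ) + 1, s) (catVerts d L) := by
  ext p
  rw [mem_insert, mem_catVerts, mem_catVerts, Prod.ext_iff]
  by_cases h : p.2 = s
  · simp only [h, if_pos, Nat.cast_add, Nat.cast_one, and_true]
    rw [mem_Icc] at hs ⊢
    omega
  · simp [h]

theorem wiener_caterpillar_add_leaf {s : ℤ} (hs : s ∈ Icc (-d) d) :
    wiener (caterpillar d (fun i => L i + if i = s then 1 else 0)) =
      wiener (caterpillar d L) + ∑ q ∈ catVerts d L, catDist ((L s : ℤ) + 1, s) q := by
  rw [wiener_caterpillar, wiener_caterpillar, catVerts_add_leaf hs,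
    sum_sum_insert_of_symm catDist_comm (new_leaf_notMem_catVerts s),
    catDist_self, add_zero, smul_eq_mul]
  omega

lemma sum_catDist_new_leaf (s : ℤ) :
    ∑ q ∈ catVerts d L, catDist ((L s : ℤ) + 1, s) q =
      ∑ q ∈ catVerts d L, (s - q.2).natAbs + ∑ q ∈ catVerts d L, (1 + depth q) := by
  rw [← sum_add_distrib]
  refine sum_congr rfl fun q hq => ?_
  have hne : ((L s : ℤ) + 1, s) ≠ q := fun h => new_leaf_notMem_catVerts s (h ▸ hq)
  have hleaf : (L s : ℤ) + 1 ≠ 0 := by omega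
  simp only [catDist, if_neg hne, depth, if_neg hleaf]
  omega

lemma sum_catVerts_eq_sum_Icc {M : Type*} [AddCommMonoid M] (g : ℤ → M) :
    ∑ q ∈ catVerts d L, g q.2 = ∑ i ∈ Icc (-d) d, (L i + 1) • g i := by
  rw [catVerts, sum_biUnion]
  · refine sum_congr rfl fun i _ => ?_
    rw [sum_image (fun _ _ _ _ h => (Prod.mk.inj h).1)]
    dsimp only
    rw [sum_const, Int.card_Icc]
    congr 1
  · intro i _ j _ hij
    simp only [Function.onFun, Finset.disjoint_left, mem_image]
    rintro _ ⟨_, _, rfl⟩ ⟨_, _, h⟩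
    exact hij (Prod.mk.inj h).2.symm

theorem wiener_caterpillar_add_leaf_sub {s t : ℤ} (hs : s ∈ Icc (-d) d)
    (ht : t ∈ Icc (-d) d) :
    (wiener (caterpillar d (fun i => L i + if i = s then 1 else 0)) : ℤ) -
      wiener (caterpillar d (fun i => L i + if i = t then 1 else 0)) =
      ∑ i ∈ Icc (-d) d, ((L i : ℤ) + 1) * (|s - i| - |t - i|) := by
  have hcol : ∀ r : ℤ, ((∑ q ∈ catVerts d L, (r - q.2).natAbs : ℕ) : ℤ) =
      ∑ i ∈ Icc (-d) d, ((L i : ℤ) + 1) * |r - i| := by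
    intro r
    push_cast [Int.natCast_natAbs]
    rw [sum_catVerts_eq_sum_Icc (fun i => |r - i|)]
    simp only [nsmul_eq_mul, Nat.cast_add, Nat.cast_one]
  rw [wiener_caterpillar_add_leaf hs, wiener_caterpillar_add_leaf ht, sum_catDist_new_leaf,
    sum_catDist_new_leaf]
  simp only [Nat.cast_add, hcol, mul_sub, sum_sub_distrib]
  ring

end Caterpillar

open Caterpillar

def G1BaseL (n d x : ℤ) : ℤ → ℕ := fun i => B1L (n - 2) d x i + if i = d then 1 else 0

lemma wiener_G1_eq (n d x s : ℤ) :
    wiener (G1 n d x s) =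
      wiener (caterpillar d (fun i => G1BaseL n d x i + if i = s then 1 else 0)) := by
  rw [G1, show (fun i => B1L (n - 2) d x i + (if i = s then 1 else 0) + if i = d then 1 else 0) =
    (fun i => G1BaseL n d x i + if i = s then 1 else 0) from funext fun i => by
      simp only [G1BaseL]; omega]

lemma sum_G1BaseL_mul {n d x K : ℤ} (hK : (n - 2 - 2 * d - 4) / 2 = K) (hKd : K ≤ d)
    (hx : 1 ≤ x) (hxd : x ≤ d) (φ : ℤ → ℤ) :
    ∑ i ∈ Icc (-d) d, ((G1BaseL n d x i : ℤ) + 1) * φ i =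
      ∑ i ∈ Icc (-d) d, φ i + ∑ i ∈ Icc (-K) K, φ i +
        φ (-d - 1 + x) + φ (d + 1 - x) + φ d := by
  have hpt : ∀ i, ((G1BaseL n d x i : ℤ) + 1) * φ i =
      φ i + (if |i| ≤ K then φ i else 0) + (if i = -d - 1 + x then φ i else 0) +
        (if i = d + 1 - x then φ i else 0) + (if i = d then φ i else 0) := by
    intro i
    simp only [G1BaseL, B1L, hK]
    by_cases ha : i = -d - 1 + x
    · simp only [ha, true_or, if_true, if_neg (show -d - 1 + x ≠ d + 1 - x by omega)]
      split_ifs <;> push_cast <;> ring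
    · simp only [ha, false_or, if_false]
      split_ifs <;> push_cast <;> ring
  have hfilter : (Icc (-d) d).filter (|·| ≤ K) = Icc (-K) K := by
    ext i
    simp only [mem_filter, mem_Icc, abs_le]
    omega
  have hmem : ∀ i, -d ≤ i → i ≤ d → i ∈ Icc (-d) d := fun i h1 h2 =>
    mem_Icc.mpr ⟨h1, h2⟩
  simp only [hpt, sum_add_distrib, sum_ite_eq']
  rw [← sum_filter, hfilter]
  simp only [if_pos (hmem _ (by omega : -d ≤ -d - 1 + x) (by omega)),
    if_pos (hmem _ (by omega : -d ≤ d + 1 - x) (by omega)),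
    if_pos (hmem _ (by omega : -d ≤ d) le_rfl)]

theorem wiener_G1_sub_wiener_G1_zero {n d x s K : ℤ} (hK : (n - 2 - 2 * d - 4) / 2 = K)
    (hKd : K ≤ d) (hsK : |s| ≤ K + 1) (hx : 1 ≤ x) (hsx : |s| + x ≤ d) :
    (wiener (G1 n d x s) : ℤ) - wiener (G1 n d x 0) = 2 * s ^ 2 - s := by
  have hs1 := neg_abs_le s
  have hs2 := le_abs_self s
  have hs : s ∈ Icc (-d) d := mem_Icc.mpr ⟨by omega, by omega⟩
  have h0 : (0 : ℤ) ∈ Icc (-d) d := mem_Icc.mpr ⟨by omega, by omega⟩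
  rw [wiener_G1_eq, wiener_G1_eq, wiener_caterpillar_add_leaf_sub hs h0,
    sum_G1BaseL_mul hK hKd hx (by omega)]
  simp only [zero_sub, abs_neg]
  rw [sum_Icc_abs_sub_sub_abs (by omega), sum_Icc_abs_sub_sub_abs hsK,
    abs_of_nonneg (by omega : 0 ≤ s - (-d - 1 + x)), abs_of_neg (by omega : -d - 1 + x < 0),
    abs_of_nonpos (by omega : s - (d + 1 - x) ≤ 0), abs_of_pos (by omega : 0 < d + 1 - x),
    abs_of_nonpos (by omega : s - d ≤ 0), abs_of_pos (by omega : 0 < d)]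
  ring

theorem wiener_G1_steps_general (n d x : ℤ)
    (hd1 : n - 4 ≤ 4 * d) (hd2 : 2 * d ≤ n - 10)
    (hx1 : 1 ≤ x) (hx2 : 2 * x ≤ 4 + 4 * d - (n - 2)) :
    wiener (G1 n d x 1) = wiener (G1 n d x 0) + 1 ∧
    wiener (G1 n d x 2) = wiener (G1 n d x 0) + 6 ∧
    wiener (G1 n d x (-1)) = wiener (G1 n d x 0) + 3 := by
  have hK : (n - 2 - 2 * d - 4) / 2 ≤ d := by omega
  have step : ∀ s : ℤ, |s| ≤ 2 →
      (wiener (G1 n d x s) : ℤ) - wiener (G1 n d x 0) = 2 * s ^ 2 - s :=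
    fun s hs => wiener_G1_sub_wiener_G1_zero rfl hK (by omega) hx1 (by omega)
  have h1 := step 1 (by norm_num)
  have h2 := step 2 (by norm_num)
  have h3 := step (-1) (by norm_num)
  norm_num at h1 h2 h3
  omega

/-- `W(G₁(n,d,x,1)) = W(G₁(n,d,x,0)) + 1`,
`W(G₁(n,d,x,2)) = W(G₁(n,d,x,0)) + 6` and `W(G₁(n,d,x,−1)) = W(G₁(n,d,x,0)) + 3`. -/
theorem wiener_G1_steps (n d x : ℤ) (hne : Even n) (hn : 20 ≤ n)
    (hd1 : n - 4 ≤ 4 * d) (hd2 : 2 * d ≤ n - 10)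
    (hx1 : 1 ≤ x) (hx2 : 2 * x ≤ 4 + 4 * d - (n - 2)) :
    wiener (G1 n d x 1) = wiener (G1 n d x 0) + 1 ∧
    wiener (G1 n d x 2) = wiener (G1 n d x 0) + 6 ∧
    wiener (G1 n d x (-1)) = wiener (G1 n d x 0) + 3 :=
  wiener_G1_steps_general n d x hd1 hd2 hx1 hx2
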